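/- Let m ≥ 1 be an integer and let B be a subset of the cells of the m × m square grid such that at least one row of the grid is entirely contained in B and at least one column of the grid is entirely contained in B. Then |∂B| ≥ √(m² − |B|). -/

import Mathlib

/-- The cells of the `m × m` square grid: pairs `(i, j)` with `1 ≤ i, j ≤ m`. -/
def gridCells (m : ℕ) : Finset (ℕ × ℕ) := (Finset.Icc 1 m) ×ˢ (Finset.Icc 1 m)

/-- Two cells are adjacent if they agree in one coordinate and differ by exactly `1`
in the other (i.e. they share a side). -/
def adjacent (c c' : ℕ × ℕ) : Prop :=
  (c.1 = c'.1 ∧ (c.2 + 1 = c'.2 ∨ c'.2 + 1 = c.2)) ∨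
  (c.2 = c'.2 ∧ (c.1 + 1 = c'.1 ∨ c'.1 + 1 = c.1))

-- The boundary `∂B` of a set `B` of cells: all cells (of the grid) not in `B` that are
-- adjacent to some cell of `B`.
open Classical in
noncomputable def gridBoundary (m : ℕ) (B : Finset (ℕ × ℕ)) : Finset (ℕ × ℕ) :=
  (gridCells m).filter (fun c => c ∉ B ∧ ∃ c' ∈ B, adjacent c c')

/-!
Every white cell (one outside `B`) shares its row with the black column, so walking along that
row from the white cell to the black column crosses a boundary cell of the same row; hence the
white cells occupy at most `|∂B|` rows and, by the same argument with the black row, at most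
`|∂B|` columns. Thus `m² - |B| ≤ #(white cells) ≤ |∂B|²`.
-/

open Finset

theorem Nat.exists_le_lt_and_not_succ {P : ℕ → Prop} {a b : ℕ} (hab : a ≤ b)
    (ha : P a) (hb : ¬P b) : ∃ k, a ≤ k ∧ k < b ∧ P k ∧ ¬P (k + 1) := by
  induction b, hab using Nat.le_induction with
  | base => exact absurd ha hb
  | succ n han ih =>
    by_cases hn : P n
    · exact ⟨n, han, n.lt_succ_self, hn, hb⟩
    · obtain ⟨k, hak, hkn, hk, hk'⟩ := ih hn
      exact ⟨k, hak, by omega, hk, hk'⟩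

theorem Nat.exists_consecutive_flip {P : ℕ → Prop} {a b : ℕ} (ha : P a) (hb : ¬P b) :
    ∃ k k', (k + 1 = k' ∨ k' + 1 = k) ∧ min a b ≤ k ∧ k ≤ max a b ∧ P k ∧ ¬P k' := by
  rcases le_total a b with hab | hba
  · obtain ⟨k, hak, hkb, hk, hk'⟩ := Nat.exists_le_lt_and_not_succ hab ha hb
    exact ⟨k, k + 1, Or.inl rfl, by omega, by omega, hk, hk'⟩
  · obtain ⟨k, hbk, hka, hk, hk'⟩ :=
      Nat.exists_le_lt_and_not_succ (P := fun t => ¬P t) hba hb (not_not.mpr ha)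
    exact ⟨k + 1, k, Or.inr rfl, by omega, by omega, not_not.mp hk', hk⟩

theorem Finset.card_le_card_image_fst_mul_card_image_snd {α β : Type*} [DecidableEq α]
    [DecidableEq β] (s : Finset (α × β)) : #s ≤ #(s.image Prod.fst) * #(s.image Prod.snd) :=
  (card_le_card subset_product).trans (card_product _ _).le

theorem mem_gridCells {m i j : ℕ} : (i, j) ∈ gridCells m ↔ i ∈ Icc 1 m ∧ j ∈ Icc 1 m :=
  mem_product

theorem adjacent_comm {c c' : ℕ × ℕ} : adjacent c c' ↔ adjacent c' c := by
  unfold adjacent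
  omega

theorem mem_gridBoundary {m : ℕ} {B : Finset (ℕ × ℕ)} {c : ℕ × ℕ} :
    c ∈ gridBoundary m B ↔ c ∈ gridCells m ∧ c ∉ B ∧ ∃ c' ∈ B, adjacent c c' := by
  simp only [gridBoundary, mem_filter]

theorem exists_mem_gridBoundary_of_path {m : ℕ} {B : Finset (ℕ × ℕ)} {f : ℕ → ℕ × ℕ}
    (hf : ∀ k, adjacent (f k) (f (k + 1))) {a b : ℕ}
    (hgrid : ∀ k, min a b ≤ k → k ≤ max a b → f k ∈ gridCells m)
    (ha : f a ∉ B) (hb : f b ∈ B) : ∃ k, f k ∈ gridBoundary m B := by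
  obtain ⟨k, k', hkk', hak, hkb, hk, hk'⟩ :=
    Nat.exists_consecutive_flip (P := fun t => f t ∉ B) ha (not_not.mpr hb)
  have hadj : adjacent (f k) (f k') := by
    rcases hkk' with rfl | rfl
    · exact hf k
    · exact adjacent_comm.mp (hf k')
  exact ⟨k, mem_gridBoundary.mpr ⟨hgrid k hak hkb, hk, f k', not_not.mp hk', hadj⟩⟩

theorem image_fst_sdiff_subset_image_fst_gridBoundary {m : ℕ} {B : Finset (ℕ × ℕ)}
    (hcol : ∃ j ∈ Icc 1 m, ∀ i ∈ Icc 1 m, (i, j) ∈ B) :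
    (gridCells m \ B).image Prod.fst ⊆ (gridBoundary m B).image Prod.fst := by
  obtain ⟨j₀, hj₀, hcolB⟩ := hcol
  simp only [subset_iff, mem_image, mem_sdiff, Prod.exists, exists_and_right, exists_eq_right]
  rintro i ⟨j, hij, hwhite⟩
  rw [mem_gridCells] at hij
  obtain ⟨k, hk⟩ := exists_mem_gridBoundary_of_path (f := fun t => (i, t)) (m := m)
    (fun t => Or.inl ⟨rfl, Or.inl rfl⟩) (a := j) (b := j₀)
    (fun t hlo hhi => mem_gridCells.mpr ⟨hij.1, by simp only [mem_Icc] at *; omega⟩)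
    hwhite (hcolB i hij.1)
  exact ⟨k, hk⟩

theorem image_snd_sdiff_subset_image_snd_gridBoundary {m : ℕ} {B : Finset (ℕ × ℕ)}
    (hrow : ∃ i ∈ Icc 1 m, ∀ j ∈ Icc 1 m, (i, j) ∈ B) :
    (gridCells m \ B).image Prod.snd ⊆ (gridBoundary m B).image Prod.snd := by
  obtain ⟨i₀, hi₀, hrowB⟩ := hrow
  simp only [subset_iff, mem_image, mem_sdiff, Prod.exists, exists_eq_right]
  rintro j ⟨i, hij, hwhite⟩
  rw [mem_gridCells] at hij
  obtain ⟨k, hk⟩ := exists_mem_gridBoundary_of_path (f := fun t => (t, j)) (m := m)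
    (fun t => Or.inr ⟨rfl, Or.inl rfl⟩) (a := i) (b := i₀)
    (fun t hlo hhi => mem_gridCells.mpr ⟨by simp only [mem_Icc] at *; omega, hij.2⟩)
    hwhite (hrowB j hij.2)
  exact ⟨k, hk⟩

theorem boundary_card_of_black_row_and_col_general (m : ℕ)
    (B : Finset (ℕ × ℕ))
    (hrow : ∃ i ∈ Finset.Icc 1 m, ∀ j ∈ Finset.Icc 1 m, (i, j) ∈ B)
    (hcol : ∃ j ∈ Finset.Icc 1 m, ∀ i ∈ Finset.Icc 1 m, (i, j) ∈ B) :
    ((gridBoundary m B).card : ℝ) ≥ Real.sqrt ((m : ℝ) ^ 2 - (B.card : ℝ)) := by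
  set D := gridBoundary m B
  set W := gridCells m \ B
  have hwhite : #W ≤ #D * #D := calc
    #W ≤ #(W.image Prod.fst) * #(W.image Prod.snd) := card_le_card_image_fst_mul_card_image_snd W
    _ ≤ #(D.image Prod.fst) * #(D.image Prod.snd) :=
      Nat.mul_le_mul (card_le_card (image_fst_sdiff_subset_image_fst_gridBoundary hcol))
        (card_le_card (image_snd_sdiff_subset_image_snd_gridBoundary hrow))
    _ ≤ #D * #D := Nat.mul_le_mul card_image_le card_image_le
  have hcard : #(gridCells m) = m ^ 2 := by simp [gridCells, sq]
  have hsq : m ^ 2 ≤ #D * #D + #B :=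
    hcard ▸ card_le_card_sdiff_add_card.trans (Nat.add_le_add_right hwhite _)
  rw [ge_iff_le, Real.sqrt_le_left (Nat.cast_nonneg _), sq (#D : ℝ), sub_le_iff_le_add]
  exact_mod_cast hsq

theorem boundary_card_of_black_row_and_col (m : ℕ) (hm : 1 ≤ m)
    (B : Finset (ℕ × ℕ)) (hB : B ⊆ gridCells m)
    (hrow : ∃ i ∈ Finset.Icc 1 m, ∀ j ∈ Finset.Icc 1 m, (i, j) ∈ B)
    (hcol : ∃ j ∈ Finset.Icc 1 m, ∀ i ∈ Finset.Icc 1 m, (i, j) ∈ B) :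
    ((gridBoundary m B).card : ℝ) ≥ Real.sqrt ((m : ℝ) ^ 2 - (B.card : ℝ)) :=
  boundary_card_of_black_row_and_col_general m B hrow hcol
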